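/- Let k be a commutative ring, d ≥ 0, and let X, Y, Z be finitely generated free k-modules with rank(Y) ≥ d. Then the map Γ^d(Hom(X,Y)) ⊗ Γ^d(Hom(Y,Z)) → Γ^d(Hom(X,Z)) induced by composition (via the diagonal map Γ^d(U) ⊗ Γ^d(V) → Γ^d(U ⊗ V) followed by Γ^d of the composition map) is surjective. -/

import Mathlib

open TensorProduct PiTensorProduct

variable (k : Type) [CommRing k]

/-- The action of a permutation `σ ∈ S_d` on the `d`-th tensor power of `V`,
permuting the factors of the tensor product. -/
noncomputable def permTensorMap (d : ℕ) (V : Type) [AddCommGroup V] [Module k V]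
    (σ : Equiv.Perm (Fin d)) :
    (⨂[k] (_ : Fin d), V) →ₗ[k] (⨂[k] (_ : Fin d), V) :=
  (PiTensorProduct.reindex k (fun _ : Fin d => V) σ).toLinearMap

/-- `Γ^d(V)`, the `d`-th divided power of `V`, i.e. the submodule of `S_d`-invariants
`(V^{⊗ d})^{S_d}` of the `d`-th tensor power of `V`. -/
noncomputable def dividedPower (d : ℕ) (V : Type) [AddCommGroup V] [Module k V] :
    Submodule k (⨂[k] (_ : Fin d), V) :=
  ⨅ σ : Equiv.Perm (Fin d), LinearMap.ker (permTensorMap k d V σ - LinearMap.id)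

/-- The map `j_d : (U^{⊗d}) ⊗ (V^{⊗d}) → (U ⊗ V)^{⊗d}` induced by the diagonal inclusion
of `S_d` in `S_d × S_d`. -/
noncomputable def diagTensor (d : ℕ) (U V : Type) [AddCommGroup U] [Module k U]
    [AddCommGroup V] [Module k V] :
    ((⨂[k] (_ : Fin d), U) ⊗[k] (⨂[k] (_ : Fin d), V)) →ₗ[k] ⨂[k] (_ : Fin d), (U ⊗[k] V) :=
  TensorProduct.lift (PiTensorProduct.map₂ (fun _ => TensorProduct.mk k U V))

/-- Composition of linear maps, as a linear map `Hom(X,Y) ⊗ Hom(Y,Z) → Hom(X,Z)`. -/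
noncomputable def compTensor (X Y Z : Type) [AddCommGroup X] [Module k X]
    [AddCommGroup Y] [Module k Y] [AddCommGroup Z] [Module k Z] :
    ((X →ₗ[k] Y) ⊗[k] (Y →ₗ[k] Z)) →ₗ[k] (X →ₗ[k] Z) :=
  TensorProduct.lift (LinearMap.llcomp k X Y Z).flip

/-- The map `Γ^d(Hom(X,Y)) ⊗ Γ^d(Hom(Y,Z)) → Hom(X,Z)^{⊗d}` induced by composition in the
category `Γ^d 𝒱_k` (composing the inclusions of the divided powers with `j_d` and with the
`d`-th tensor power of the composition map). -/
noncomputable def dividedPowerComposition (d : ℕ) (X Y Z : Type) [AddCommGroup X] [Module k X]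
    [AddCommGroup Y] [Module k Y] [AddCommGroup Z] [Module k Z] :
    ((dividedPower k d (X →ₗ[k] Y)) ⊗[k] (dividedPower k d (Y →ₗ[k] Z)))
      →ₗ[k] ⨂[k] (_ : Fin d), (X →ₗ[k] Z) :=
  (PiTensorProduct.map (fun _ => compTensor k X Y Z)) ∘ₗ
    (diagTensor k d (X →ₗ[k] Y) (Y →ₗ[k] Z)) ∘ₗ
      (TensorProduct.map (dividedPower k d (X →ₗ[k] Y)).subtype
        (dividedPower k d (Y →ₗ[k] Z)).subtype)

/-!
Choose bases. The coefficients of an `S_d`-invariant tensor are constant on `S_d`-orbits of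
multi-indices `f : Fin d → ι`, so `Γ^d(V)` is spanned by the orbit sums
`∑_{g ∈ S_d·f} e_{g 0} ⊗ ⋯ ⊗ e_{g (d-1)}`. For `V = Hom(X, Z)` take the elementary maps
`E_{zx}`. A multi-index `f` involves at most `d ≤ rank Y` distinct pairs `(z, x)`, so they can
be routed through pairwise distinct basis vectors `y = φ(z, x)` of `Y`: `E_{zx} = E_{zy} ∘ E_{yx}`,
while `E_{z'y'} ∘ E_{yx} = 0` for distinct pairs. Composing the orbit sums of the two families of
factors, only the diagonal terms survive and give back the orbit sum of `f`.
-/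
section OrbitSum

variable {k : Type} [CommRing k] {d : ℕ} {V : Type} [AddCommGroup V] [Module k V]

theorem mem_dividedPower_iff {x : ⨂[k] (_ : Fin d), V} :
    x ∈ dividedPower k d V ↔ ∀ σ : Equiv.Perm (Fin d), reindex k (fun _ => V) σ x = x := by
  simp [dividedPower, permTensorMap, Submodule.mem_iInf, sub_eq_zero]

theorem Basis.piTensorProduct_repr_reindex {ι : Type} (b : Module.Basis ι k V)
    (σ : Equiv.Perm (Fin d)) (x : ⨂[k] (_ : Fin d), V) (g : Fin d → ι) :
    (Basis.piTensorProduct fun _ => b).repr (reindex k (fun _ => V) σ x) g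
      = (Basis.piTensorProduct fun _ => b).repr x (g ∘ σ) := by
  induction x using PiTensorProduct.induction_on with
  | smul_tprod r m =>
    simp only [map_smul, reindex_tprod, Finsupp.smul_apply,
      Basis.piTensorProduct_repr_tprod_apply]
    congr 1
    exact Fintype.prod_equiv σ.symm _ _ (fun j => by simp)
  | add x y hx hy => simp only [map_add, Finsupp.add_apply, hx, hy]

variable {ι : Type} [DecidableEq ι]

def orbitFinset (f : Fin d → ι) : Finset (Fin d → ι) :=
  Finset.univ.image fun σ : Equiv.Perm (Fin d) => f ∘ σ

theorem mem_orbitFinset {f g : Fin d → ι} :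
    g ∈ orbitFinset f ↔ ∃ σ : Equiv.Perm (Fin d), f ∘ σ = g := by
  simp [orbitFinset]

theorem self_mem_orbitFinset (f : Fin d → ι) : f ∈ orbitFinset f :=
  mem_orbitFinset.2 ⟨1, rfl⟩

theorem orbitFinset_comp (f : Fin d → ι) (σ : Equiv.Perm (Fin d)) :
    orbitFinset (f ∘ σ) = orbitFinset f := by
  ext g
  simp only [mem_orbitFinset]
  constructor
  · rintro ⟨τ, rfl⟩
    exact ⟨σ * τ, rfl⟩
  · rintro ⟨τ, rfl⟩
    exact ⟨σ⁻¹ * τ, by ext j; simp⟩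

theorem orbitFinset_eq_iff_mem {f g : Fin d → ι} :
    orbitFinset g = orbitFinset f ↔ g ∈ orbitFinset f := by
  refine ⟨fun h => h ▸ self_mem_orbitFinset g, fun h => ?_⟩
  obtain ⟨σ, rfl⟩ := mem_orbitFinset.1 h
  exact orbitFinset_comp f σ

theorem comp_mem_orbitFinset {f g : Fin d → ι} (hg : g ∈ orbitFinset f)
    (σ : Equiv.Perm (Fin d)) :
    g ∘ σ ∈ orbitFinset f := by
  rw [← orbitFinset_eq_iff_mem, orbitFinset_comp, orbitFinset_eq_iff_mem.2 hg]

variable (k) in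
noncomputable def orbitSum (e : ι → V) (f : Fin d → ι) : ⨂[k] (_ : Fin d), V :=
  ∑ g ∈ orbitFinset f, tprod k fun j => e (g j)

theorem orbitSum_mem_dividedPower (e : ι → V) (f : Fin d → ι) :
    orbitSum k e f ∈ dividedPower k d V := by
  refine mem_dividedPower_iff.2 fun σ => ?_
  simp only [orbitSum, map_sum, reindex_tprod]
  exact Finset.sum_nbij' (· ∘ σ.symm) (· ∘ σ) (fun g hg => comp_mem_orbitFinset hg _)
    (fun g hg => comp_mem_orbitFinset hg _) (fun g _ => by ext; simp) (fun g _ => by ext; simp)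
    (fun g _ => rfl)

variable [Fintype ι]

theorem dividedPower_le_span_orbitSum (b : Module.Basis ι k V) :
    dividedPower k d V ≤ Submodule.span k (Set.range (orbitSum k b)) := by
  intro x hx
  set B := Basis.piTensorProduct fun _ : Fin d => b
  have hinv : ∀ (g : Fin d → ι) (σ : Equiv.Perm (Fin d)), B.repr x (g ∘ σ) = B.repr x g :=
    fun g σ => by
    rw [← Basis.piTensorProduct_repr_reindex, mem_dividedPower_iff.1 hx]
  rw [← B.sum_repr x, ← Finset.sum_fiberwise_of_maps_to
    (fun g _ => Finset.mem_image_of_mem orbitFinset (Finset.mem_univ g))]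
  refine Submodule.sum_mem _ fun O hO => ?_
  obtain ⟨f, -, rfl⟩ := Finset.mem_image.1 hO
  have hfiber : ∑ g with orbitFinset g = orbitFinset f, B.repr x g • B g
      = B.repr x f • orbitSum k b f := by
    rw [orbitSum, Finset.smul_sum]
    refine Finset.sum_congr (by ext; simp [orbitFinset_eq_iff_mem]) fun g hg => ?_
    obtain ⟨σ, rfl⟩ := mem_orbitFinset.1 hg
    simp [B, hinv]
  rw [hfiber]
  exact Submodule.smul_mem _ _ (Submodule.subset_span ⟨f, rfl⟩)

end OrbitSum

section Composition

variable {k : Type} [CommRing k] {d : ℕ}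

theorem diagTensor_tprod_tmul_tprod {U V : Type} [AddCommGroup U] [Module k U]
    [AddCommGroup V] [Module k V] (u : Fin d → U) (v : Fin d → V) :
    diagTensor k d U V (tprod k u ⊗ₜ tprod k v) = ⨂ₜ[k] j, u j ⊗ₜ v j := by
  simp [diagTensor, map₂_tprod_tprod]

theorem diagTensor_reindex_tmul_reindex {U V : Type} [AddCommGroup U] [Module k U]
    [AddCommGroup V] [Module k V] (σ : Equiv.Perm (Fin d))
    (x : ⨂[k] (_ : Fin d), U) (y : ⨂[k] (_ : Fin d), V) :
    diagTensor k d U V (reindex k (fun _ => U) σ x ⊗ₜ reindex k (fun _ => V) σ y)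
      = reindex k (fun _ => U ⊗[k] V) σ (diagTensor k d U V (x ⊗ₜ y)) := by
  induction x using PiTensorProduct.induction_on with
  | smul_tprod r u =>
    induction y using PiTensorProduct.induction_on with
    | smul_tprod s v =>
      simp only [map_smul, ← smul_tmul', tmul_smul, reindex_tprod, diagTensor_tprod_tmul_tprod]
    | add y y' hy hy' => simp only [map_add, tmul_add, hy, hy']
  | add x x' hx hx' => simp only [map_add, add_tmul, hx, hx']

variable {X Y Z : Type} [AddCommGroup X] [Module k X] [AddCommGroup Y] [Module k Y]
  [AddCommGroup Z] [Module k Z]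

theorem compTensor_tmul (f : X →ₗ[k] Y) (g : Y →ₗ[k] Z) : compTensor k X Y Z (f ⊗ₜ g) = g ∘ₗ f :=
  rfl

theorem dividedPowerComposition_tmul (a : dividedPower k d (X →ₗ[k] Y))
    (b : dividedPower k d (Y →ₗ[k] Z)) :
    dividedPowerComposition k d X Y Z (a ⊗ₜ b)
      = map (fun _ => compTensor k X Y Z)
          (diagTensor k d _ _ ((a : ⨂[k] (_ : Fin d), X →ₗ[k] Y) ⊗ₜ (b : ⨂[k] (_ : Fin d), _))) :=
  rfl

theorem dividedPowerComposition_mem_dividedPower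
    (t : dividedPower k d (X →ₗ[k] Y) ⊗[k] dividedPower k d (Y →ₗ[k] Z)) :
    dividedPowerComposition k d X Y Z t ∈ dividedPower k d (X →ₗ[k] Z) := by
  induction t using TensorProduct.induction_on with
  | zero => simp
  | add s t hs ht => simpa only [map_add] using add_mem hs ht
  | tmul a b =>
    refine mem_dividedPower_iff.2 fun σ => ?_
    rw [dividedPowerComposition_tmul, ← map_reindex, ← diagTensor_reindex_tmul_reindex,
      mem_dividedPower_iff.1 a.2, mem_dividedPower_iff.1 b.2]

theorem PiTensorProduct.tprod_ite_eq {ι M : Type} [Fintype ι] [AddCommGroup M] [Module k M]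
    {α : Type} [DecidableEq α] (u v : ι → α) (w : ι → M) :
    (⨂ₜ[k] j, if u j = v j then w j else 0) = if u = v then tprod k w else 0 := by
  by_cases huv : u = v
  · simp [huv]
  · obtain ⟨j, hj⟩ := Function.ne_iff.1 huv
    rw [if_neg huv]
    exact (tprod k).map_coord_zero j (if_neg hj)

theorem dividedPowerComposition_orbitSum_tmul_orbitSum {ι : Type} [DecidableEq ι]
    (A : ι → X →ₗ[k] Y) (B : ι → Y →ₗ[k] Z) (E : ι → X →ₗ[k] Z) (f : Fin d → ι)
    (hcomp : ∀ j j', B (f j') ∘ₗ A (f j) = if f j = f j' then E (f j) else 0) :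
    dividedPowerComposition k d X Y Z
        (⟨orbitSum k A f, orbitSum_mem_dividedPower A f⟩ ⊗ₜ
          ⟨orbitSum k B f, orbitSum_mem_dividedPower B f⟩)
      = orbitSum k E f := by
  rw [dividedPowerComposition_tmul]
  have hcomp' : ∀ u ∈ orbitFinset f, ∀ v ∈ orbitFinset f, ∀ j,
      B (v j) ∘ₗ A (u j) = if u j = v j then E (u j) else 0 := by
    rintro u hu v hv j
    obtain ⟨σ, rfl⟩ := mem_orbitFinset.1 hu
    obtain ⟨τ, rfl⟩ := mem_orbitFinset.1 hv
    exact hcomp (σ j) (τ j)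
  simp only [orbitSum, sum_tmul, tmul_sum, map_sum, diagTensor_tprod_tmul_tprod, map_tprod,
    compTensor_tmul]
  refine Finset.sum_congr rfl fun u hu => ?_
  calc _ = ∑ v ∈ orbitFinset f, if v = u then ⨂ₜ[k] j, E (v j) else 0 :=
        Finset.sum_congr rfl fun v hv => by
          simp_rw [hcomp' v hv u hu]
          exact tprod_ite_eq v u _
    _ = _ := by rw [Finset.sum_ite_eq', if_pos hu]

end Composition

theorem Module.Basis.linearMap_comp_linearMap {k X Y Z ιX ιY ιZ : Type} [CommRing k]
    [AddCommGroup X] [Module k X] [AddCommGroup Y] [Module k Y] [AddCommGroup Z] [Module k Z]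
    [Fintype ιX] [Fintype ιY] [Fintype ιZ] [DecidableEq ιX] [DecidableEq ιY]
    (bX : Basis ιX k X) (bY : Basis ιY k Y) (bZ : Basis ιZ k Z) (z : ιZ) (y y' : ιY) (x : ιX) :
    bY.linearMap bZ (z, y') ∘ₗ bX.linearMap bY (y, x)
      = if y' = y then bX.linearMap bZ (z, x) else 0 := by
  refine bX.ext fun x' => ?_
  by_cases hx : x = x' <;> by_cases hy : y' = y <;>
    simp [Module.Basis.linearMap_apply_apply, hx, hy]

theorem exists_injOn_range_of_card_le {α β : Type} [Fintype β] [Nonempty β] {d : ℕ}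
    (f : Fin d → α) (hd : d ≤ Fintype.card β) : ∃ φ : α → β, Set.InjOn φ (Set.range f) := by
  obtain ⟨φ, -, hφ⟩ := (Set.finite_range f).exists_injOn_of_encard_le (t := Set.univ) <| calc
    (Set.range f).encard ≤ (Set.univ : Set (Fin d)).encard := by
      rw [← Set.image_univ]; exact Set.encard_image_le _ _
    _ ≤ (Set.univ : Set β).encard := by simpa [ENat.card_eq_coe_fintype_card] using hd
  exact ⟨φ, hφ⟩

theorem exists_comp_eq_linearMap {k X Y Z ιX ιY ιZ : Type} [CommRing k]
    [AddCommGroup X] [Module k X] [AddCommGroup Y] [Module k Y] [AddCommGroup Z] [Module k Z]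
    [Fintype ιX] [Fintype ιY] [Fintype ιZ] [DecidableEq ιX] [DecidableEq ιY] [DecidableEq ιZ]
    (bX : Module.Basis ιX k X) (bY : Module.Basis ιY k Y) (bZ : Module.Basis ιZ k Z)
    {d : ℕ} (f : Fin d → ιZ × ιX) (hd : d ≤ Fintype.card ιY) :
    ∃ (A : ιZ × ιX → X →ₗ[k] Y) (B : ιZ × ιX → Y →ₗ[k] Z), ∀ j j',
      B (f j') ∘ₗ A (f j) = if f j = f j' then bX.linearMap bZ (f j) else 0 := by
  rcases isEmpty_or_nonempty ιY with hY | hY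
  · exact ⟨0, 0, fun j => absurd j.isLt (by simp_all)⟩
  obtain ⟨φ, hφ⟩ := exists_injOn_range_of_card_le f hd
  refine ⟨fun i => bX.linearMap bY (φ i, i.2), fun i => bY.linearMap bZ (i.1, φ i), fun j j' => ?_⟩
  rw [Module.Basis.linearMap_comp_linearMap]
  by_cases h : f j = f j'
  · simp [h]
  · have : φ (f j') ≠ φ (f j) := fun hφj => h (hφ ⟨j, rfl⟩ ⟨j', rfl⟩ hφj.symm)
    simp [h, this]

/-- **Key lemma.**  If `X, Y, Z` are finitely generated free `k`-modules and `rank Y ≥ d`, then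
the composition map `Γ^d(Hom(X,Y)) ⊗ Γ^d(Hom(Y,Z)) → Γ^d(Hom(X,Z))` is surjective, i.e. the
range of the induced map into the ambient tensor power is exactly `Γ^d(Hom(X,Z))`. -/
theorem statement0 (d : ℕ) (X Y Z : Type)
    [AddCommGroup X] [Module k X] [Module.Free k X] [Module.Finite k X]
    [AddCommGroup Y] [Module k Y] [Module.Free k Y] [Module.Finite k Y]
    [AddCommGroup Z] [Module k Z] [Module.Free k Z] [Module.Finite k Z]
    (hY : d ≤ Module.finrank k Y) :
    LinearMap.range (dividedPowerComposition k d X Y Z)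
      = dividedPower k d (X →ₗ[k] Z) := by
  classical
  rcases subsingleton_or_nontrivial k with hk | hk
  · exact Subsingleton.elim _ _
  refine le_antisymm ?_ ?_
  · rintro _ ⟨t, rfl⟩
    exact dividedPowerComposition_mem_dividedPower t
  let bX := Module.Free.chooseBasis k X
  let bY := Module.Free.chooseBasis k Y
  let bZ := Module.Free.chooseBasis k Z
  refine (dividedPower_le_span_orbitSum (bX.linearMap bZ)).trans (Submodule.span_le.2 ?_)
  rintro _ ⟨f, rfl⟩
  obtain ⟨A, B, hcomp⟩ := exists_comp_eq_linearMap bX bY bZ f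
    (hY.trans_eq (Module.finrank_eq_card_chooseBasisIndex k Y))
  exact ⟨_, dividedPowerComposition_orbitSum_tmul_orbitSum A B _ f hcomp⟩
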